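/- Let R be a commutative ring, A a Hopf algebra over R with antipode S, and let F be a Drinfeld twist for A. Write F = Σᵢ fᵢ⁽¹⁾ ⊗ fᵢ⁽²⁾ and F⁻¹ = Σⱼ gⱼ⁽¹⁾ ⊗ gⱼ⁽²⁾. Then the element v = Σᵢ fᵢ⁽¹⁾ · S(fᵢ⁽²⁾) of A is invertible, with inverse w = Σⱼ S(gⱼ⁽¹⁾) · gⱼ⁽²⁾; that is, v·w = 1 and w·v = 1. -/

import Mathlib

open TensorProduct

noncomputable section

variable {R A : Type*} [CommRing R] [Ring A] [Algebra R A]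

/-- The embedding `A ⊗ A → A ⊗ (A ⊗ A)`, `x ⊗ y ↦ x ⊗ (y ⊗ 1)`, i.e. `F ↦ F₁₂`. -/
def emb12 : A ⊗[R] A →ₗ[R] A ⊗[R] (A ⊗[R] A) :=
  TensorProduct.map LinearMap.id ((TensorProduct.mk R A A).flip 1)

/-- The embedding `A ⊗ A → A ⊗ (A ⊗ A)`, `x ↦ 1 ⊗ x`, i.e. `F ↦ F₂₃`. -/
def emb23 : A ⊗[R] A →ₗ[R] A ⊗[R] (A ⊗[R] A) :=
  TensorProduct.mk R A (A ⊗[R] A) 1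

/-- `D ⊗ id : A ⊗ A → A ⊗ (A ⊗ A)` (via the associator). -/
def tensorFst (D : A →ₗ[R] A ⊗[R] A) : A ⊗[R] A →ₗ[R] A ⊗[R] (A ⊗[R] A) :=
  (TensorProduct.assoc R A A A).toLinearMap ∘ₗ TensorProduct.map D LinearMap.id

/-- `id ⊗ D : A ⊗ A → A ⊗ (A ⊗ A)`. -/
def tensorSnd (D : A →ₗ[R] A ⊗[R] A) : A ⊗[R] A →ₗ[R] A ⊗[R] (A ⊗[R] A) :=
  TensorProduct.map LinearMap.id D

/-- `e ⊗ id : A ⊗ A → A` (via `R ⊗ A ≅ A`). -/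
def counitFst (e : A →ₗ[R] R) : A ⊗[R] A →ₗ[R] A :=
  (TensorProduct.lid R A).toLinearMap ∘ₗ TensorProduct.map e LinearMap.id

/-- `id ⊗ e : A ⊗ A → A` (via `A ⊗ R ≅ A`). -/
def counitSnd (e : A →ₗ[R] R) : A ⊗[R] A →ₗ[R] A :=
  (TensorProduct.rid R A).toLinearMap ∘ₗ TensorProduct.map LinearMap.id e

/-- The comultiplication `D` twisted by `F`: `a ↦ F * D a * F⁻¹`. -/
def twistMap (F Finv : A ⊗[R] A) (D : A →ₗ[R] A ⊗[R] A) : A →ₗ[R] A ⊗[R] A :=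
  LinearMap.mulRight R Finv ∘ₗ LinearMap.mulLeft R F ∘ₗ D

/-- `F` (with two-sided inverse `Finv`) is a Drinfeld twist with respect to the
comultiplication `D` and the counit `e`: it is invertible, satisfies the cocycle equation
`F₁₂ · (D ⊗ id)(F) = F₂₃ · (id ⊗ D)(F)`, and the normalization
`(e ⊗ id)(F) = 1 = (id ⊗ e)(F)`. -/
def IsDrinfeldTwist (D : A →ₗ[R] A ⊗[R] A) (e : A →ₗ[R] R) (F Finv : A ⊗[R] A) : Prop :=
  F * Finv = 1 ∧ Finv * F = 1 ∧
    emb12 F * tensorFst D F = emb23 F * tensorSnd D F ∧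
    counitFst e F = 1 ∧ counitSnd e F = 1

/-! With `T (x ⊗ y ⊗ z) = x S(y) z` one has `v w = T (F₂₃⁻¹ F₁₂)`. The cocycle equation rewrites
`F₂₃⁻¹ F₁₂` as `(id ⊗ Δ)(F) · (Δ ⊗ id)(F⁻¹)`, and on such products the antipode axioms collapse `T`
to `(id ⊗ ε)(F) · (ε ⊗ id)(F⁻¹) = 1`. Symmetrically, with `T' (x ⊗ y ⊗ z) = S(x) y S(z)`,
`w v = T' (F₁₂⁻¹ F₂₃) = T' ((Δ ⊗ id)(F) · (id ⊗ Δ)(F⁻¹)) = S((id ⊗ ε)(F⁻¹)) S((ε ⊗ id)(F)) = 1`. -/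

theorem mul_eq_mul_of_mul_eq_mul {M : Type*} [Monoid M] {a b c d b' c' : M}
    (h : a * b = c * d) (hb : b * b' = 1) (hc : c' * c = 1) : c' * a = d * b' :=
  calc c' * a = c' * (a * b) * b' := by rw [mul_assoc, mul_assoc, hb, mul_one]
    _ = d * b' := by rw [h, ← mul_assoc, hc, one_mul]

lemma emb12_tmul (a b : A) : emb12 (R := R) (a ⊗ₜ b) = a ⊗ₜ (b ⊗ₜ (1 : A)) := rfl

lemma emb23_apply (x : A ⊗[R] A) : emb23 x = (1 : A) ⊗ₜ x := rfl

lemma tensorFst_tmul (D : A →ₗ[R] A ⊗[R] A) (a b : A) :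
    tensorFst D (a ⊗ₜ b) = TensorProduct.assoc R A A A (D a ⊗ₜ b) := rfl

lemma tensorSnd_tmul (D : A →ₗ[R] A ⊗[R] A) (a b : A) : tensorSnd D (a ⊗ₜ b) = a ⊗ₜ D b := rfl

lemma counitFst_tmul (e : A →ₗ[R] R) (a b : A) : counitFst e (a ⊗ₜ b) = e a • b := rfl

lemma counitSnd_tmul (e : A →ₗ[R] R) (a b : A) : counitSnd e (a ⊗ₜ b) = e b • a := rfl

lemma emb12_eq_toLinearMap : (emb12 : A ⊗[R] A →ₗ[R] A ⊗[R] (A ⊗[R] A)) =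
    (Algebra.TensorProduct.map (AlgHom.id R A) Algebra.TensorProduct.includeLeft).toLinearMap :=
  TensorProduct.ext' fun _ _ ↦ rfl

lemma emb23_eq_toLinearMap : (emb23 : A ⊗[R] A →ₗ[R] A ⊗[R] (A ⊗[R] A)) =
    (Algebra.TensorProduct.includeRight : A ⊗[R] A →ₐ[R] A ⊗[R] (A ⊗[R] A)).toLinearMap :=
  rfl

lemma tensorFst_eq_toLinearMap (D : A →ₐ[R] A ⊗[R] A) : tensorFst D.toLinearMap =
    ((Algebra.TensorProduct.assoc R R R A A A).toAlgHom.comp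
      (Algebra.TensorProduct.map D (AlgHom.id R A))).toLinearMap :=
  TensorProduct.ext' fun _ _ ↦ rfl

lemma tensorSnd_eq_toLinearMap (D : A →ₐ[R] A ⊗[R] A) :
    tensorSnd D.toLinearMap = (Algebra.TensorProduct.map (AlgHom.id R A) D).toLinearMap :=
  TensorProduct.ext' fun _ _ ↦ rfl

lemma counitFst_eq_toLinearMap (e : A →ₐ[R] R) : counitFst e.toLinearMap =
    ((Algebra.TensorProduct.lid R A).toAlgHom.comp
      (Algebra.TensorProduct.map e (AlgHom.id R A))).toLinearMap :=
  TensorProduct.ext' fun _ _ ↦ rfl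

lemma counitSnd_eq_toLinearMap (e : A →ₐ[R] R) : counitSnd e.toLinearMap =
    ((Algebra.TensorProduct.rid R R A).toAlgHom.comp
      (Algebra.TensorProduct.map (AlgHom.id R A) e)).toLinearMap :=
  TensorProduct.ext' fun _ _ ↦ rfl

namespace IsDrinfeldTwist

variable {D : A →ₐ[R] A ⊗[R] A} {e : A →ₐ[R] R} {F Finv : A ⊗[R] A}

theorem counitFst_inv (hF : IsDrinfeldTwist D.toLinearMap e.toLinearMap F Finv) :
    counitFst e.toLinearMap Finv = 1 :=
  calc counitFst e.toLinearMap Finv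
      = counitFst e.toLinearMap F * counitFst e.toLinearMap Finv := by rw [hF.2.2.2.1, one_mul]
    _ = 1 := by
      simp only [counitFst_eq_toLinearMap, AlgHom.toLinearMap_apply]
      exact map_mul_eq_one _ hF.1

theorem counitSnd_inv (hF : IsDrinfeldTwist D.toLinearMap e.toLinearMap F Finv) :
    counitSnd e.toLinearMap Finv = 1 :=
  calc counitSnd e.toLinearMap Finv
      = counitSnd e.toLinearMap F * counitSnd e.toLinearMap Finv := by rw [hF.2.2.2.2, one_mul]
    _ = 1 := by
      simp only [counitSnd_eq_toLinearMap, AlgHom.toLinearMap_apply]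
      exact map_mul_eq_one _ hF.1

theorem emb23_inv_mul_emb12 (hF : IsDrinfeldTwist D.toLinearMap e.toLinearMap F Finv) :
    emb23 Finv * emb12 F = tensorSnd D.toLinearMap F * tensorFst D.toLinearMap Finv := by
  refine mul_eq_mul_of_mul_eq_mul hF.2.2.1 ?_ ?_
  · simp only [tensorFst_eq_toLinearMap, AlgHom.toLinearMap_apply]; exact map_mul_eq_one _ hF.1
  · simp only [emb23_eq_toLinearMap, AlgHom.toLinearMap_apply]; exact map_mul_eq_one _ hF.2.1

theorem emb12_inv_mul_emb23 (hF : IsDrinfeldTwist D.toLinearMap e.toLinearMap F Finv) :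
    emb12 Finv * emb23 F = tensorFst D.toLinearMap F * tensorSnd D.toLinearMap Finv := by
  refine mul_eq_mul_of_mul_eq_mul hF.2.2.1.symm ?_ ?_
  · simp only [tensorSnd_eq_toLinearMap, AlgHom.toLinearMap_apply]; exact map_mul_eq_one _ hF.1
  · simp only [emb12_eq_toLinearMap, AlgHom.toLinearMap_apply]; exact map_mul_eq_one _ hF.2.1

end IsDrinfeldTwist

section Antipode

variable {R A : Type*} [CommRing R] [Ring A] [HopfAlgebra R A]

local notation "S" => HopfAlgebra.antipode R (A := A)
local notation "μ" => LinearMap.mul' R A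
local notation "Δ" => Coalgebra.comul (R := R) (A := A)
local notation "ε" => Coalgebra.counit (R := R) (A := A)

def mulAntipodeMul : A ⊗[R] (A ⊗[R] A) →ₗ[R] A :=
  μ ∘ₗ TensorProduct.map LinearMap.id (μ ∘ₗ TensorProduct.map S LinearMap.id)

def antipodeMulAntipode : A ⊗[R] (A ⊗[R] A) →ₗ[R] A :=
  μ ∘ₗ TensorProduct.map S (μ ∘ₗ TensorProduct.map LinearMap.id S)

@[simp] lemma mulAntipodeMul_tmul (x y z : A) :
    mulAntipodeMul (R := R) (x ⊗ₜ (y ⊗ₜ z)) = x * (S y * z) := rfl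

@[simp] lemma antipodeMulAntipode_tmul (x y z : A) :
    antipodeMulAntipode (R := R) (x ⊗ₜ (y ⊗ₜ z)) = S x * (y * S z) := rfl

lemma mulAntipodeMul_tmul_mul_assoc (a d : A) (u v : A ⊗[R] A) :
    mulAntipodeMul ((a ⊗ₜ u) * TensorProduct.assoc R A A A (v ⊗ₜ d)) =
      a * (μ (LinearMap.lTensor A S v) * (μ (LinearMap.rTensor A S u) * d)) := by
  induction u using TensorProduct.induction_on with
  | zero => simp
  | add u₁ u₂ h₁ h₂ => simp only [tmul_add, map_add, add_mul, mul_add, h₁, h₂]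
  | tmul b₁ b₂ =>
    induction v using TensorProduct.induction_on with
    | zero => simp
    | add v₁ v₂ h₁ h₂ => simp only [add_tmul, map_add, mul_add, add_mul, h₁, h₂]
    | tmul c₁ c₂ => simp [HopfAlgebra.antipode_mul_antidistrib, mul_assoc]

lemma antipodeMulAntipode_assoc_mul_tmul (c b : A) (u v : A ⊗[R] A) :
    antipodeMulAntipode (TensorProduct.assoc R A A A (u ⊗ₜ b) * (c ⊗ₜ v)) =
      S c * (μ (LinearMap.rTensor A S u) * (μ (LinearMap.lTensor A S v) * S b)) := by
  induction u using TensorProduct.induction_on with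
  | zero => simp
  | add u₁ u₂ h₁ h₂ => simp only [add_tmul, map_add, add_mul, mul_add, h₁, h₂]
  | tmul a₁ a₂ =>
    induction v using TensorProduct.induction_on with
    | zero => simp
    | add v₁ v₂ h₁ h₂ => simp only [tmul_add, map_add, mul_add, add_mul, h₁, h₂]
    | tmul d₁ d₂ => simp [HopfAlgebra.antipode_mul_antidistrib, mul_assoc]

lemma mulAntipodeMul_tensorSnd_mul_tensorFst (x y : A ⊗[R] A) :
    mulAntipodeMul (tensorSnd Δ x * tensorFst Δ y) = counitSnd ε x * counitFst ε y := by
  induction x using TensorProduct.induction_on with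
  | zero => simp
  | add x₁ x₂ h₁ h₂ => simp only [map_add, add_mul, h₁, h₂]
  | tmul a b =>
    induction y using TensorProduct.induction_on with
    | zero => simp
    | add y₁ y₂ h₁ h₂ => simp only [map_add, mul_add, h₁, h₂]
    | tmul c d =>
      rw [tensorSnd_tmul, tensorFst_tmul, mulAntipodeMul_tmul_mul_assoc,
        HopfAlgebra.mul_antipode_lTensor_comul_apply, HopfAlgebra.mul_antipode_rTensor_comul_apply,
        counitSnd_tmul, counitFst_tmul, ← Algebra.smul_def, ← Algebra.smul_def]
      simp only [mul_smul_comm, smul_mul_assoc, smul_smul, mul_comm]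

lemma antipodeMulAntipode_tensorFst_mul_tensorSnd (x y : A ⊗[R] A) :
    antipodeMulAntipode (tensorFst Δ x * tensorSnd Δ y) =
      S (counitSnd ε y) * S (counitFst ε x) := by
  induction x using TensorProduct.induction_on with
  | zero => simp
  | add x₁ x₂ h₁ h₂ => simp only [map_add, add_mul, mul_add, h₁, h₂]
  | tmul a b =>
    induction y using TensorProduct.induction_on with
    | zero => simp
    | add y₁ y₂ h₁ h₂ => simp only [map_add, mul_add, add_mul, h₁, h₂]
    | tmul c d =>
      rw [tensorSnd_tmul, tensorFst_tmul, antipodeMulAntipode_assoc_mul_tmul,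
        HopfAlgebra.mul_antipode_lTensor_comul_apply, HopfAlgebra.mul_antipode_rTensor_comul_apply,
        counitSnd_tmul, counitFst_tmul, map_smul, map_smul, ← Algebra.smul_def, ← Algebra.smul_def]
      simp only [mul_smul_comm, smul_mul_assoc, smul_smul]

lemma mulAntipodeMul_emb23_mul_emb12 (x y : A ⊗[R] A) :
    mulAntipodeMul (emb23 y * emb12 x) =
      μ (LinearMap.lTensor A S x) * μ (LinearMap.rTensor A S y) := by
  induction x using TensorProduct.induction_on with
  | zero => simp
  | add x₁ x₂ h₁ h₂ => simp only [map_add, mul_add, add_mul, h₁, h₂]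
  | tmul a b =>
    induction y using TensorProduct.induction_on with
    | zero => simp
    | add y₁ y₂ h₁ h₂ => simp only [map_add, add_mul, mul_add, h₁, h₂]
    | tmul c d => simp [emb23_apply, emb12_tmul, HopfAlgebra.antipode_mul_antidistrib, mul_assoc]

lemma antipodeMulAntipode_emb12_mul_emb23 (x y : A ⊗[R] A) :
    antipodeMulAntipode (emb12 y * emb23 x) =
      μ (LinearMap.rTensor A S y) * μ (LinearMap.lTensor A S x) := by
  induction x using TensorProduct.induction_on with
  | zero => simp
  | add x₁ x₂ h₁ h₂ => simp only [map_add, mul_add, h₁, h₂]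
  | tmul a b =>
    induction y using TensorProduct.induction_on with
    | zero => simp
    | add y₁ y₂ h₁ h₂ => simp only [map_add, add_mul, h₁, h₂]
    | tmul c d => simp [emb23_apply, emb12_tmul, mul_assoc]

end Antipode

/-- for a Hopf algebra `A` with antipode `S` and a Drinfeld twist `F` with
inverse `F⁻¹`, the element `v = Σ f⁽¹⁾ · S(f⁽²⁾)` (the image of `F` under `μ ∘ (id ⊗ S)`)
is invertible with inverse `w = Σ S(g⁽¹⁾) · g⁽²⁾` (the image of `F⁻¹` under `μ ∘ (S ⊗ id)`):
`v·w = 1` and `w·v = 1`. -/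
theorem twist_v_invertible {R A : Type*} [CommRing R] [Ring A] [HopfAlgebra R A]
    (F Finv : A ⊗[R] A)
    (hF : IsDrinfeldTwist (Coalgebra.comul (R := R) (A := A)) (Coalgebra.counit (R := R) (A := A))
      F Finv) :
    LinearMap.mul' R A
        (TensorProduct.map LinearMap.id (HopfAlgebra.antipode (R := R) (A := A)) F) *
      LinearMap.mul' R A
        (TensorProduct.map (HopfAlgebra.antipode (R := R) (A := A)) LinearMap.id Finv) = 1 ∧
    LinearMap.mul' R A
        (TensorProduct.map (HopfAlgebra.antipode (R := R) (A := A)) LinearMap.id Finv) *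
      LinearMap.mul' R A
        (TensorProduct.map LinearMap.id (HopfAlgebra.antipode (R := R) (A := A)) F) = 1 := by
  have hF' : IsDrinfeldTwist (Bialgebra.comulAlgHom R A).toLinearMap
      (Bialgebra.counitAlgHom R A).toLinearMap F Finv := hF
  have hFst_inv : counitFst (R := R) Coalgebra.counit Finv = 1 := hF'.counitFst_inv
  have hSnd_inv : counitSnd (R := R) Coalgebra.counit Finv = 1 := hF'.counitSnd_inv
  obtain ⟨-, -, -, hFst, hSnd⟩ := hF
  constructor
  · calc _ = mulAntipodeMul (emb23 Finv * emb12 F) := (mulAntipodeMul_emb23_mul_emb12 F Finv).symm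
      _ = counitSnd Coalgebra.counit F * counitFst Coalgebra.counit Finv := by
        rw [hF'.emb23_inv_mul_emb12]; exact mulAntipodeMul_tensorSnd_mul_tensorFst F Finv
      _ = 1 := by rw [hSnd, hFst_inv, mul_one]
  · calc _ = antipodeMulAntipode (emb12 Finv * emb23 F) :=
          (antipodeMulAntipode_emb12_mul_emb23 F Finv).symm
      _ = HopfAlgebra.antipode R (counitSnd Coalgebra.counit Finv) *
          HopfAlgebra.antipode R (counitFst Coalgebra.counit F) := by
        rw [hF'.emb12_inv_mul_emb23]; exact antipodeMulAntipode_tensorFst_mul_tensorSnd F Finv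
      _ = 1 := by rw [hSnd_inv, hFst, HopfAlgebra.antipode_one, mul_one]
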